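/- arXiv:math/0404547 — 4 statements merged into one kernel-verified Lean document; each statement's English description precedes it below -/
import Mathlib

section
/- Let a ∈ ℝ with a ≥ |b| for b ∈ ℂ. Two pairs (z,w), (z',w') ∈ ℂ² satisfying |z|²+|w|² = 2a, z·conj(w) = -i·b, with |w| = |w'|, are related by (z',w') = (e^{iθ}z, e^{iθ}w) for some θ ∈ ℝ, provided (z,w) ≠ (0,0). -/
lemma aux_rot (u v : ℂ) (hu : u ≠ 0) (h : ‖u‖ = ‖v‖) :
    ∃ θ : ℝ, v = Complex.exp (θ * Complex.I) * u := by
  refine ⟨(v / u).arg, ?_⟩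
  have habs : ‖v / u‖ = 1 := by
    rw [norm_div, ← h, div_self]
    simpa using hu
  have := Complex.norm_mul_exp_arg_mul_I (v / u)
  rw [habs, Complex.ofReal_one, one_mul] at this
  rw [this]
  field_simp

theorem stmt_3 (a : ℝ) (b : ℂ) (hab : ‖b‖ ≤ a)
    (z w z' w' : ℂ)
    (h1 : ‖z‖ ^ 2 + ‖w‖ ^ 2 = 2 * a)
    (h2 : z * (starRingEnd ℂ) w = -Complex.I * b)
    (h1' : ‖z'‖ ^ 2 + ‖w'‖ ^ 2 = 2 * a)
    (h2' : z' * (starRingEnd ℂ) w' = -Complex.I * b)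
    (hw : ‖w‖ = ‖w'‖)
    (hne : (z, w) ≠ (0, 0)) :
    ∃ θ : ℝ, z' = Complex.exp (θ * Complex.I) * z ∧
      w' = Complex.exp (θ * Complex.I) * w := by
  have hz : ‖z‖ = ‖z'‖ := by
    have : ‖z‖ ^ 2 = ‖z'‖ ^ 2 := by
      rw [hw] at h1; linarith
    have h0 := norm_nonneg z
    have h0' := norm_nonneg z'
    nlinarith
  by_cases hw0 : w = 0
  · have hw'0 : w' = 0 := by
      rw [hw0, norm_zero] at hw
      exact norm_eq_zero.mp hw.symm
    have hz0 : z ≠ 0 := by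
      intro h; exact hne (by simp [h, hw0])
    obtain ⟨θ, hθ⟩ := aux_rot z z' hz0 hz
    exact ⟨θ, hθ, by simp [hw0, hw'0]⟩
  · obtain ⟨θ, hθ⟩ := aux_rot w w' hw0 hw
    refine ⟨θ, ?_, hθ⟩
    have hcw : (starRingEnd ℂ) w ≠ 0 := by simpa using hw0
    have hkey : z' * (starRingEnd ℂ) w' = z * (starRingEnd ℂ) w := by
      rw [h2, h2']
    rw [hθ] at hkey
    rw [map_mul] at hkey
    have hexp : (starRingEnd ℂ) (Complex.exp (θ * Complex.I)) =
        (Complex.exp (θ * Complex.I))⁻¹ := by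
      rw [← Complex.exp_conj]
      rw [← Complex.exp_neg]
      congr 1
      simp [Complex.conj_I, mul_comm]
    rw [hexp] at hkey
    have hene : Complex.exp (θ * Complex.I) ≠ 0 := Complex.exp_ne_zero _
    field_simp at hkey
    exact mul_right_cancel₀ hcw (by linear_combination (starRingEnd ℂ) w * hkey)
end

section
/- Suppose the vectors u_1,…,u_d ∈ ℝⁿ are such that the polyhedron {s ∈ ℝⁿ : ⟨s,u_k⟩ ≥ λ_k for all k} is bounded (for some reals λ_k) and nonempty. Then for every choice of constants, the set {(z,w) ∈ ℂ^d × ℂ^d : ∃ a ∈ ℝⁿ, ⟨a,u_k⟩ = ½(|z_k|² + |w_k|²) + λ_k for all k} is compact. -/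
open Finset

/-- Key lemma: if the polyhedron `{s | ∀ k, lam0 k ≤ ⟨s, u k⟩}` is bounded and nonempty,
then for any `lam` the values `⟨a, u k⟩` are bounded above over all `a` in the polyhedron
defined with `lam`. -/
lemma stmt_7_key (n d : ℕ) (u : Fin d → Fin n → ℝ) (lam0 lam : Fin d → ℝ)
    (hbdd : Bornology.IsBounded {s : Fin n → ℝ | ∀ k, lam0 k ≤ ∑ j, s j * u k j})
    (hne : {s : Fin n → ℝ | ∀ k, lam0 k ≤ ∑ j, s j * u k j}.Nonempty) :
    ∃ C : ℝ, ∀ a : Fin n → ℝ, (∀ k, lam k ≤ ∑ j, a j * u k j) →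
      ∀ k, ∑ j, a j * u k j ≤ C := by
  -- trivial recession cone
  have hN : ∀ v : Fin n → ℝ, (∀ k, 0 ≤ ∑ j, v j * u k j) → v = 0 := by
    obtain ⟨s₀, hs₀⟩ := hne
    obtain ⟨r, hr⟩ := Bornology.IsBounded.exists_norm_le hbdd
    intro v hv
    by_contra hv0
    have hvn : 0 < ‖v‖ := norm_pos_iff.mpr hv0
    have hr0 : 0 ≤ r := le_trans (norm_nonneg s₀) (hr s₀ hs₀)
    set t : ℝ := (r + ‖s₀‖ + 1) / ‖v‖ with ht
    have ht0 : 0 ≤ t := by positivity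
    have hmem : (s₀ + t • v) ∈ {s : Fin n → ℝ | ∀ k, lam0 k ≤ ∑ j, s j * u k j} := by
      intro k
      have hsum : ∑ j, (s₀ + t • v) j * u k j
          = (∑ j, s₀ j * u k j) + t * ∑ j, v j * u k j := by
        rw [Finset.mul_sum, ← Finset.sum_add_distrib]
        refine Finset.sum_congr rfl fun j _ => ?_
        simp [add_mul, mul_assoc]
      rw [hsum]
      have := hs₀ k
      nlinarith [hv k]
    have hb := hr _ hmem
    have h1 : t * ‖v‖ ≤ ‖s₀ + t • v‖ + ‖s₀‖ := by
      have h := norm_sub_le (s₀ + t • v) s₀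
      rwa [add_sub_cancel_left, norm_smul, Real.norm_eq_abs, abs_of_nonneg ht0] at h
    have h3 : t * ‖v‖ = r + ‖s₀‖ + 1 := by
      rw [ht]; field_simp
    linarith
  rcases Nat.eq_zero_or_pos d with hd | hd
  · exact ⟨0, fun a _ k => absurd k.isLt (by omega)⟩
  rcases Nat.eq_zero_or_pos n with hn | hn
  · subst hn
    exact ⟨0, fun a _ k => by simp⟩
  haveI hnefn : Nonempty (Fin n) := ⟨⟨0, hn⟩⟩
  haveI hnefd : Nonempty (Fin d) := ⟨⟨0, hd⟩⟩
  set g : (Fin n → ℝ) → ℝ :=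
    fun v => Finset.univ.inf' Finset.univ_nonempty (fun k => ∑ j, v j * u k j) with hgdef
  have hgc : Continuous g := by
    refine Continuous.finset_inf'_apply Finset.univ_nonempty fun k _ => ?_
    exact continuous_finset_sum _ fun j _ => (continuous_apply j).mul continuous_const
  have hsph : IsCompact (Metric.sphere (0 : Fin n → ℝ) 1) := isCompact_sphere 0 1
  have hsne : (Metric.sphere (0 : Fin n → ℝ) 1).Nonempty :=
    NormedSpace.sphere_nonempty.mpr zero_le_one
  obtain ⟨v₀, hv₀mem, hv₀max⟩ := hsph.exists_isMaxOn hsne hgc.continuousOn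
  have hv₀norm : ‖v₀‖ = 1 := mem_sphere_zero_iff_norm.mp hv₀mem
  have hv₀ne : v₀ ≠ 0 := by
    intro h; rw [h, norm_zero] at hv₀norm; exact one_ne_zero hv₀norm.symm
  set ε : ℝ := -g v₀ with hεdef
  have hε : 0 < ε := by
    have hnot : ¬ ∀ k, 0 ≤ ∑ j, v₀ j * u k j := fun h => hv₀ne (hN v₀ h)
    push_neg at hnot
    obtain ⟨k, hk⟩ := hnot
    have hle : g v₀ ≤ ∑ j, v₀ j * u k j := Finset.inf'_le _ (Finset.mem_univ k)
    simp only [hεdef]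
    linarith
  set L : ℝ := Finset.univ.sup' Finset.univ_nonempty (fun k => |lam k|) with hLdef
  have hL0 : 0 ≤ L := by
    rw [hLdef]
    exact le_trans (abs_nonneg (lam ⟨0, hd⟩))
      (Finset.le_sup' (fun k => |lam k|) (Finset.mem_univ (⟨0, hd⟩ : Fin d)))
  set U : ℝ := Finset.univ.sup' Finset.univ_nonempty (fun k => ∑ j, |u k j|) with hUdef
  have hU0 : 0 ≤ U := by
    rw [hUdef]
    exact le_trans (Finset.sum_nonneg fun j _ => abs_nonneg _)
      (Finset.le_sup' (fun k => ∑ j, |u k j|) (Finset.mem_univ (⟨0, hd⟩ : Fin d)))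
  have hnorm : ∀ a : Fin n → ℝ, (∀ k, lam k ≤ ∑ j, a j * u k j) → ‖a‖ ≤ L / ε := by
    intro a ha
    rcases eq_or_ne a 0 with h0 | h0
    · rw [h0, norm_zero]; positivity
    · have hna : 0 < ‖a‖ := norm_pos_iff.mpr h0
      set v : Fin n → ℝ := ‖a‖⁻¹ • a with hvdef
      have hvnorm : ‖v‖ = 1 := by
        rw [hvdef, norm_smul, Real.norm_eq_abs, abs_of_nonneg (by positivity),
          inv_mul_cancel₀ hna.ne']
      have hvs : v ∈ Metric.sphere (0 : Fin n → ℝ) 1 := mem_sphere_zero_iff_norm.mpr hvnorm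
      have h1 : g v ≤ g v₀ := hv₀max hvs
      obtain ⟨k, _, hgk⟩ :=
        Finset.exists_mem_eq_inf' (Finset.univ_nonempty (α := Fin d))
          (fun k => ∑ j, v j * u k j)
      have hlin : ∑ j, v j * u k j = ‖a‖⁻¹ * ∑ j, a j * u k j := by
        rw [Finset.mul_sum]
        refine Finset.sum_congr rfl fun j _ => ?_
        simp [hvdef, mul_assoc]
      have h2 : ‖a‖⁻¹ * (∑ j, a j * u k j) ≤ -ε := by
        rw [← hlin, ← hgk]; linarith
      have h3 : (∑ j, a j * u k j) ≤ ‖a‖ * -ε := by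
        calc (∑ j, a j * u k j) = ‖a‖ * (‖a‖⁻¹ * ∑ j, a j * u k j) := by
              field_simp
          _ ≤ ‖a‖ * -ε := mul_le_mul_of_nonneg_left h2 hna.le
      have h4 : lam k ≤ ∑ j, a j * u k j := ha k
      have h5 : |lam k| ≤ L := by
        rw [hLdef]; exact Finset.le_sup' (fun k => |lam k|) (Finset.mem_univ k)
      have h6 : -lam k ≤ |lam k| := neg_le_abs _
      rw [le_div_iff₀ hε]
      nlinarith
  refine ⟨(L / ε) * U, fun a ha k => ?_⟩
  calc ∑ j, a j * u k j ≤ ∑ j, |a j| * |u k j| := by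
        refine le_trans (le_abs_self _) (le_trans (Finset.abs_sum_le_sum_abs _ _) ?_)
        refine le_of_eq (Finset.sum_congr rfl fun j _ => ?_)
        exact abs_mul _ _
    _ ≤ ∑ j, ‖a‖ * |u k j| := by
        refine Finset.sum_le_sum fun j _ => mul_le_mul_of_nonneg_right ?_ (abs_nonneg _)
        simpa [Real.norm_eq_abs] using norm_le_pi_norm a j
    _ = ‖a‖ * ∑ j, |u k j| := (Finset.mul_sum _ _ _).symm
    _ ≤ (L / ε) * U := by
        have hUk : ∑ j, |u k j| ≤ U := by
          rw [hUdef]; exact Finset.le_sup' (fun k => ∑ j, |u k j|) (Finset.mem_univ k)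
        refine mul_le_mul (hnorm a ha) hUk
          (Finset.sum_nonneg fun j _ => abs_nonneg _) (by positivity)

theorem stmt_7 (n d : ℕ) (u : Fin d → Fin n → ℝ) (lam0 : Fin d → ℝ)
    (hbdd : Bornology.IsBounded {s : Fin n → ℝ | ∀ k, lam0 k ≤ ∑ j, s j * u k j})
    (hne : {s : Fin n → ℝ | ∀ k, lam0 k ≤ ∑ j, s j * u k j}.Nonempty) :
    ∀ lam : Fin d → ℝ,
      IsCompact {p : (Fin d → ℂ) × (Fin d → ℂ) | ∃ a : Fin n → ℝ, ∀ k,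
        ∑ j, a j * u k j =
          (1 / 2) * (‖p.1 k‖ ^ 2 + ‖p.2 k‖ ^ 2) + lam k} := by
  intro lam
  set S := {p : (Fin d → ℂ) × (Fin d → ℂ) | ∃ a : Fin n → ℝ, ∀ k,
    ∑ j, a j * u k j =
      (1 / 2) * (‖p.1 k‖ ^ 2 + ‖p.2 k‖ ^ 2) + lam k} with hS
  -- the linear map
  set T : (Fin n → ℝ) →ₗ[ℝ] (Fin d → ℝ) :=
    { toFun := fun a k => ∑ j, a j * u k j
      map_add' := by
        intro a b; funext k
        show ∑ j, (a + b) j * u k j = (∑ j, a j * u k j) + ∑ j, b j * u k j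
        rw [← Finset.sum_add_distrib]
        exact Finset.sum_congr rfl fun j _ => by simp [add_mul]
      map_smul' := by
        intro c a; funext k
        show ∑ j, (c • a) j * u k j = c * ∑ j, a j * u k j
        rw [Finset.mul_sum]
        exact Finset.sum_congr rfl fun j _ => by simp [mul_assoc] } with hT
  -- continuous right-hand side
  set f : (Fin d → ℂ) × (Fin d → ℂ) → (Fin d → ℝ) :=
    fun p k => (1 / 2) * (‖p.1 k‖ ^ 2 + ‖p.2 k‖ ^ 2) + lam k with hf
  have hfc : Continuous f := by
    refine continuous_pi fun k => ?_
    have h1 : Continuous fun p : (Fin d → ℂ) × (Fin d → ℂ) => ‖p.1 k‖ :=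
      continuous_norm.comp ((continuous_apply k).comp continuous_fst)
    have h2 : Continuous fun p : (Fin d → ℂ) × (Fin d → ℂ) => ‖p.2 k‖ :=
      continuous_norm.comp ((continuous_apply k).comp continuous_snd)
    exact (continuous_const.mul ((h1.pow 2).add (h2.pow 2))).add continuous_const
  have hSeq : S = f ⁻¹' (LinearMap.range T : Set (Fin d → ℝ)) := by
    ext p
    simp only [hS, Set.mem_setOf_eq, Set.mem_preimage, SetLike.mem_coe,
      LinearMap.mem_range]
    constructor
    · rintro ⟨a, ha⟩
      exact ⟨a, funext fun k => ha k⟩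
    · rintro ⟨a, ha⟩
      exact ⟨a, fun k => congrFun ha k⟩
  have hclosed : IsClosed S := by
    rw [hSeq]
    exact (Submodule.closed_of_finiteDimensional (LinearMap.range T)).preimage hfc
  have hbS : Bornology.IsBounded S := by
    obtain ⟨C, hC⟩ := stmt_7_key n d u lam0 lam hbdd hne
    set M : ℝ := ∑ k, |lam k| with hM
    have hM0 : 0 ≤ M := Finset.sum_nonneg fun k _ => abs_nonneg _
    set B : ℝ := max (C + M) 0 with hB
    have hB0 : 0 ≤ B := le_max_right _ _
    rw [isBounded_iff_forall_norm_le]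
    refine ⟨Real.sqrt (2 * B), fun p hp => ?_⟩
    obtain ⟨a, ha⟩ := hp
    have hkey : ∀ k, ‖p.1 k‖ ^ 2 ≤ 2 * B ∧ ‖p.2 k‖ ^ 2 ≤ 2 * B := by
      intro k
      have hav : ∀ k', lam k' ≤ ∑ j, a j * u k' j := by
        intro k'
        rw [ha k']
        nlinarith [sq_nonneg (‖p.1 k'‖), sq_nonneg (‖p.2 k'‖)]
      have hCk := hC a hav k
      rw [ha k] at hCk
      have hMk : |lam k| ≤ M := Finset.single_le_sum (fun k' _ => abs_nonneg (lam k'))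
        (Finset.mem_univ k)
      have h6 : -lam k ≤ |lam k| := neg_le_abs _
      have hBk : C + M ≤ B := le_max_left _ _
      constructor
      · nlinarith [sq_nonneg (‖p.2 k‖)]
      · nlinarith [sq_nonneg (‖p.1 k‖)]
    have hb1 : ∀ (z : ℂ), ‖z‖ ^ 2 ≤ 2 * B → ‖z‖ ≤ Real.sqrt (2 * B) := by
      intro z hz
      rw [Real.le_sqrt (norm_nonneg z) (by linarith)]
      exact hz
    rw [norm_prod_le_iff]
    constructor
    · rw [pi_norm_le_iff_of_nonneg (Real.sqrt_nonneg _)]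
      exact fun k => hb1 _ (hkey k).1
    · rw [pi_norm_le_iff_of_nonneg (Real.sqrt_nonneg _)]
      exact fun k => hb1 _ (hkey k).2
  exact Metric.isCompact_of_isClosed_isBounded hclosed hbS
end

section
/- Let u_1,…,u_d ∈ ℝⁿ span ℝⁿ and define bounded (hence compact) polyhedra {s : ⟨s,u_k⟩ ≥ λ_k}. Define ũ_k ∈ ℝ^{n+d} for k = 1,…,2d by ũ_k = u_k + e_{n+k} for k ≤ d and ũ_k = -e_{n+k-d} for d < k ≤ 2d (where e_j is the standard basis of ℝ^{n+d} extending ℝⁿ). Then for any constants c_1,…,c_{2d}, the polyhedron {s ∈ ℝ^{n+d} : ⟨s,ũ_k⟩ ≥ c_k, k = 1,…,2d} is bounded. -/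
/-!
Write `s = (s₁, s₂)` with `s₁ ∈ ℝⁿ`, `s₂ ∈ ℝᵈ`. The two inequalities for the index `k` read
`c_k ≤ ⟪s₁, u_k⟫ + s₂ k` and `s₂ k ≤ -c_{k+d}`; adding them puts `s₁` in the bounded polyhedron
`{⟪·, u_k⟫ ≥ c_k + c_{k+d}}`. On that bounded set each `⟪s₁, u_k⟫` is bounded above, which
traps every `s₂ k` in a bounded interval.
-/

open Finset Bornology

section

variable {n d : ℕ}

lemma sum_mul_append (s : Fin (n + d) → ℝ) (x : Fin n → ℝ) (y : Fin d → ℝ) :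
    ∑ j, s j * Fin.append x y j =
      ∑ i, s (Fin.castAdd d i) * x i + ∑ k, s (Fin.natAdd n k) * y k := by
  simp [Fin.sum_univ_add]

lemma sum_mul_append_single (s : Fin (n + d) → ℝ) (x : Fin n → ℝ) (k : Fin d) (a : ℝ) :
    ∑ j, s j * Fin.append x (Pi.single k a) j =
      ∑ i, s (Fin.castAdd d i) * x i + s (Fin.natAdd n k) * a := by
  simp [sum_mul_append, Pi.single_apply]

lemma isBounded_of_castAdd_natAdd {α : Type*} [PseudoMetricSpace α] {S : Set (Fin (n + d) → α)}
    (h₁ : IsBounded ((fun s i ↦ s (Fin.castAdd d i)) '' S))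
    (h₂ : IsBounded ((fun s k ↦ s (Fin.natAdd n k)) '' S)) : IsBounded S := by
  refine forall_isBounded_image_eval_iff.1 fun j ↦ ?_
  induction j using Fin.addCases with
  | left i => simpa [Set.image_image] using (forall_isBounded_image_eval_iff.2 h₁) i
  | right k => simpa [Set.image_image] using (forall_isBounded_image_eval_iff.2 h₂) k

lemma Bornology.IsBounded.bddAbove_image_sum_mul {P : Set (Fin n → ℝ)} (hP : IsBounded P)
    (v : Fin n → ℝ) : BddAbove ((fun x ↦ ∑ j, x j * v j) '' P) :=
  (hP.isCompact_closure.bddAbove_image (by fun_prop : Continuous _).continuousOn).mono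
    (Set.image_mono subset_closure)

end

theorem stmt_8_general (n d : ℕ) (u : Fin d → Fin n → ℝ)
    (hbdd : ∀ lam : Fin d → ℝ,
      Bornology.IsBounded {s : Fin n → ℝ | ∀ k, lam k ≤ ∑ j, s j * u k j})
    (ut : Fin d ⊕ Fin d → Fin (n + d) → ℝ)
    (hut1 : ∀ (k : Fin d) (j : Fin (n + d)),
      ut (Sum.inl k) j =
        (if h : (j : ℕ) < n then u k ⟨j, h⟩ else 0) +
        (if (j : ℕ) = n + (k : ℕ) then 1 else 0))
    (hut2 : ∀ (k : Fin d) (j : Fin (n + d)),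
      ut (Sum.inr k) j = if (j : ℕ) = n + (k : ℕ) then -1 else 0) :
    ∀ c : Fin d ⊕ Fin d → ℝ,
      Bornology.IsBounded {s : Fin (n + d) → ℝ | ∀ k, c k ≤ ∑ j, s j * ut k j} := by
  intro c
  have hut_inl (k : Fin d) : ut (.inl k) = Fin.append (u k) (Pi.single k 1) := by
    ext j
    induction j using Fin.addCases with
    | left i => simp [hut1]; omega
    | right i => simp [hut1, Pi.single_apply, Fin.ext_iff]
  have hut_inr (k : Fin d) : ut (.inr k) = Fin.append 0 (Pi.single k (-1)) := by
    ext j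
    induction j using Fin.addCases with
    | left i => simp [hut2]; omega
    | right i => simp [hut2, Pi.single_apply, Fin.ext_iff]
  set P := {x : Fin n → ℝ | ∀ k, c (.inl k) + c (.inr k) ≤ ∑ j, x j * u k j}
  have hP : IsBounded P := hbdd _
  choose M hM using fun k ↦ hP.bddAbove_image_sum_mul (u k)
  set S := {s : Fin (n + d) → ℝ | ∀ k, c k ≤ ∑ j, s j * ut k j}
  have hS (s) (hs : s ∈ S) (k : Fin d) :
      c (.inl k) ≤ ∑ i, s (Fin.castAdd d i) * u k i + s (Fin.natAdd n k) ∧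
        s (Fin.natAdd n k) ≤ -c (.inr k) := by
    have h₁ := hs (.inl k)
    have h₂ := hs (.inr k)
    simp only [hut_inl, hut_inr, sum_mul_append_single, Pi.zero_apply, mul_zero, sum_const_zero,
      zero_add, mul_one, mul_neg] at h₁ h₂
    constructor <;> linarith
  have hS₁ : (fun s i ↦ s (Fin.castAdd d i)) '' S ⊆ P := by
    rintro _ ⟨s, hs, rfl⟩ k
    linarith [hS s hs k]
  refine isBounded_of_castAdd_natAdd (hP.subset hS₁) <|
    (Metric.isBounded_Icc (fun k ↦ c (.inl k) - M k) (fun k ↦ -c (.inr k))).subset ?_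
  rintro _ ⟨s, hs, rfl⟩
  refine ⟨fun k ↦ ?_, fun k ↦ (hS s hs k).2⟩
  have hMk := hM k ⟨_, hS₁ ⟨s, hs, rfl⟩, rfl⟩
  linarith [(hS s hs k).1]

theorem stmt_8 (n d : ℕ) (u : Fin d → Fin n → ℝ)
    (hspan : Submodule.span ℝ (Set.range u) = (⊤ : Submodule ℝ (Fin n → ℝ)))
    (hbdd : ∀ lam : Fin d → ℝ,
      Bornology.IsBounded {s : Fin n → ℝ | ∀ k, lam k ≤ ∑ j, s j * u k j})
    (ut : Fin d ⊕ Fin d → Fin (n + d) → ℝ)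
    (hut1 : ∀ (k : Fin d) (j : Fin (n + d)),
      ut (Sum.inl k) j =
        (if h : (j : ℕ) < n then u k ⟨j, h⟩ else 0) +
        (if (j : ℕ) = n + (k : ℕ) then 1 else 0))
    (hut2 : ∀ (k : Fin d) (j : Fin (n + d)),
      ut (Sum.inr k) j = if (j : ℕ) = n + (k : ℕ) then -1 else 0) :
    ∀ c : Fin d ⊕ Fin d → ℝ,
      Bornology.IsBounded {s : Fin (n + d) → ℝ | ∀ k, c k ≤ ∑ j, s j * ut k j} :=
  stmt_8_general n d u hbdd ut hut1 hut2
end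

section
/- Let u₁ > 0 > u₂ be nonzero reals defining cones K_k = {(a,b) ∈ ℝ × ℂ : a u_k - λ¹_k ≥ |b u_k - λᶜ_k|} (k = 1,2) — equivalently after normalizing, K₁ points up and K₂ points down in the a-coordinate. Then K = K₁ ∩ K₂ is bounded. Conversely if u₁, u₂ > 0 then K₁ ∩ K₂, if nonempty, is unbounded. -/
theorem stmt_17 (u1 u2 : ℝ) (l1 l2 : ℝ) (c1 c2 : ℂ)
    (K1 K2 : Set (ℝ × ℂ))
    (hK1 : K1 = {p : ℝ × ℂ | ‖p.2 * (u1 : ℂ) - c1‖ ≤ p.1 * u1 - l1})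
    (hK2 : K2 = {p : ℝ × ℂ | ‖p.2 * (u2 : ℂ) - c2‖ ≤ p.1 * u2 - l2}) :
    (u1 > 0 → u2 < 0 → Bornology.IsBounded (K1 ∩ K2)) ∧
    (u1 > 0 → u2 > 0 → (K1 ∩ K2).Nonempty → ¬Bornology.IsBounded (K1 ∩ K2)) := by
  subst hK1 hK2
  constructor
  · intro h1 h2
    rw [isBounded_iff_forall_norm_le]
    set A := max (|l1| / u1) (|l2| / (-u2)) with hA
    refine ⟨max A ((A * u1 + |l1| + ‖c1‖) / u1), ?_⟩
    rintro ⟨a, b⟩ ⟨hb1, hb2⟩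
    simp only [Set.mem_setOf_eq] at hb1 hb2
    have habs1 : (0:ℝ) ≤ ‖b * (u1:ℂ) - c1‖ := norm_nonneg _
    have habs2 : (0:ℝ) ≤ ‖b * (u2:ℂ) - c2‖ := norm_nonneg _
    have ha1 : a * u1 ≥ l1 := by linarith
    have ha2 : a * u2 ≥ l2 := by linarith
    have haA : |a| ≤ A := by
      have hA1 : |l1| ≤ A * u1 := by
        have := le_max_left (|l1| / u1) (|l2| / (-u2))
        rw [div_le_iff₀ h1] at this
        rw [hA]; linarith
      have hA2 : |l2| ≤ A * (-u2) := by
        have := le_max_right (|l1| / u1) (|l2| / (-u2))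
        rw [div_le_iff₀ (by linarith : (0:ℝ) < -u2)] at this
        rw [hA]; linarith
      rw [abs_le]
      constructor
      · nlinarith [neg_abs_le l1]
      · nlinarith [neg_abs_le l2]
    have hbnd : ‖b * (u1:ℂ) - c1‖ ≤ A * u1 + |l1| := by
      have : a * u1 ≤ A * u1 := mul_le_mul_of_nonneg_right (le_abs_self a |>.trans haA) h1.le
      have : a * u1 - l1 ≤ A * u1 + |l1| := by linarith [neg_abs_le l1]
      linarith
    have hb : ‖b‖ * u1 ≤ A * u1 + |l1| + ‖c1‖ := by
      have htri : ‖b * (u1:ℂ)‖ ≤ ‖b * (u1:ℂ) - c1‖ + ‖c1‖ := by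
        have h := norm_add_le (b * (u1:ℂ) - c1) c1
        have heq : b * (u1:ℂ) - c1 + c1 = b * (u1:ℂ) := by ring
        rwa [heq] at h
      have habsmul : ‖b * (u1:ℂ)‖ = ‖b‖ * u1 := by
        rw [norm_mul, Complex.norm_real, Real.norm_eq_abs, abs_of_pos h1]
      rw [habsmul] at htri
      linarith
    have hble : ‖b‖ ≤ (A * u1 + |l1| + ‖c1‖) / u1 := by
      rw [le_div_iff₀ h1]; linarith
    have : ‖(a, b)‖ = max |a| (‖b‖) := rfl
    rw [this]
    exact max_le_max haA hble
  · intro h1 h2 ⟨⟨a, b⟩, hb1, hb2⟩ hbd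
    simp only [Set.mem_setOf_eq] at hb1 hb2
    rw [isBounded_iff_forall_norm_le] at hbd
    obtain ⟨C, hC⟩ := hbd
    set t := max 0 (C + 1 - a) with ht
    have hmem : (a + t, b) ∈ {p : ℝ × ℂ | ‖p.2 * (u1:ℂ) - c1‖ ≤ p.1 * u1 - l1} ∩
        {p : ℝ × ℂ | ‖p.2 * (u2:ℂ) - c2‖ ≤ p.1 * u2 - l2} := by
      constructor <;> simp only [Set.mem_setOf_eq]
      · nlinarith [le_max_left 0 (C + 1 - a)]
      · nlinarith [le_max_left 0 (C + 1 - a)]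
    have := hC _ hmem
    have hfst : |a + t| ≤ ‖((a + t : ℝ), b)‖ := by
      have h := norm_fst_le ((a + t, b) : ℝ × ℂ)
      rwa [Real.norm_eq_abs] at h
    have hge : a + t ≥ C + 1 := by
      have := le_max_right 0 (C + 1 - a)
      linarith
    have : a + t ≤ C := le_trans (le_abs_self _) (hfst.trans this)
    linarith
end
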